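/- (Lemma 1, chip-diverse second-moment bound, deterministic core.) Let Δ₁, …, Δ_K ∈ ℝ^d satisfy ‖Δ_k‖₂ ≤ B for all k, where B > 0, let K ≥ 1, η > 0, σ_z ≥ 0, M ≥ 1, chip weights c₁,…,c_M ≥ 0 with C_M = Σ_{m=1}^M c_m > 0, and set u_{k,j} = Δ_{k,j}/K. Then Σ_{j=1}^d [ ((Σ_{m=1}^M c_m²)/C_M²)·( (Σ_{k=1}^K [u_{k,j}]₊)² + (Σ_{k=1}^K [u_{k,j}]₋)² ) + (2σ_z²/(η C_M))·Σ_{k=1}^K |u_{k,j}| + 2Mσ_z⁴/(η² C_M²) ] ≤ ((Σ_{m=1}^M c_m²)/C_M²)·B² + (2σ_z²√d/(η C_M))·B + 2dMσ_z⁴/(η² C_M²). -/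

import Mathlib

/-!
Write `u_k ∈ ℝ^d` for the scaled increment `Δ_k / K`, so `∑_k ‖u_k‖ ≤ B`. In each coordinate the
positive and negative parts of the `u_{k,j}` add up to `∑_k |u_{k,j}|`, so the quadratic term is
at most `∑_j (∑_k |u_{k,j}|)²`, the squared norm of `∑_k |u_k|`; by the triangle inequality this
is at most `(∑_k ‖u_k‖)² ≤ B²`. The linear term is an `ℓ¹` norm, bounded by Cauchy–Schwarz by `√d`
times the `ℓ²` norm, and the constant term is simply summed over the `d` coordinates.
-/

open Finset

lemma sq_sum_max_zero_add_sq_sum_max_neg_zero_le {κ : Type*} (s : Finset κ) (x : κ → ℝ) :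
    (∑ k ∈ s, max (x k) 0) ^ 2 + (∑ k ∈ s, max (-x k) 0) ^ 2 ≤ (∑ k ∈ s, |x k|) ^ 2 := by
  have hpos : 0 ≤ ∑ k ∈ s, max (x k) 0 := sum_nonneg fun k _ => le_max_right _ _
  have hneg : 0 ≤ ∑ k ∈ s, max (-x k) 0 := sum_nonneg fun k _ => le_max_right _ _
  have hsplit : ∑ k ∈ s, |x k| = ∑ k ∈ s, max (x k) 0 + ∑ k ∈ s, max (-x k) 0 := by
    rw [← sum_add_distrib]
    exact sum_congr rfl fun k _ => (max_zero_add_max_neg_zero_eq_abs_self (x k)).symm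
  rw [hsplit]
  nlinarith [mul_nonneg hpos hneg]

namespace EuclideanSpace

variable {ι κ : Type*} [Fintype ι]

lemma norm_toLp_abs (x : EuclideanSpace ℝ ι) : ‖WithLp.toLp 2 (fun j => |x j|)‖ = ‖x‖ := by
  simp only [EuclideanSpace.norm_eq, Real.norm_eq_abs, abs_abs]

lemma sum_abs_le_sqrt_card_mul_norm (x : EuclideanSpace ℝ ι) :
    ∑ j, |x j| ≤ √(Fintype.card ι) * ‖x‖ := by
  have hcs : (∑ j, |x j|) ^ 2 ≤ Fintype.card ι * ∑ j, |x j| ^ 2 := by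
    simpa using sq_sum_le_card_mul_sum_sq (s := univ) (f := fun j => |x j|)
  calc ∑ j, |x j| = √((∑ j, |x j|) ^ 2) := (Real.sqrt_sq (sum_nonneg fun j _ => abs_nonneg _)).symm
    _ ≤ √(Fintype.card ι * ∑ j, |x j| ^ 2) := Real.sqrt_le_sqrt hcs
    _ = √(Fintype.card ι) * ‖x‖ := by
      simp only [Real.sqrt_mul (Nat.cast_nonneg _), EuclideanSpace.norm_eq, Real.norm_eq_abs]

lemma sum_sum_abs_le_sqrt_card_mul_sum_norm (s : Finset κ) (v : κ → EuclideanSpace ℝ ι) :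
    ∑ j, ∑ k ∈ s, |v k j| ≤ √(Fintype.card ι) * ∑ k ∈ s, ‖v k‖ := by
  rw [sum_comm, mul_sum]
  exact sum_le_sum fun k _ => sum_abs_le_sqrt_card_mul_norm (v k)

lemma sum_sq_sum_abs_le_sq_sum_norm (s : Finset κ) (v : κ → EuclideanSpace ℝ ι) :
    ∑ j, (∑ k ∈ s, |v k j|) ^ 2 ≤ (∑ k ∈ s, ‖v k‖) ^ 2 := by
  set w : EuclideanSpace ℝ ι := ∑ k ∈ s, WithLp.toLp 2 (fun j => |v k j|)
  have hw : ∀ j, w j = ∑ k ∈ s, |v k j| := fun j => by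
    simp only [w, WithLp.ofLp_sum, Finset.sum_apply]
  have htri : ‖w‖ ≤ ∑ k ∈ s, ‖v k‖ := by
    simpa only [norm_toLp_abs] using norm_sum_le s fun k => WithLp.toLp 2 (fun j => |v k j|)
  calc ∑ j, (∑ k ∈ s, |v k j|) ^ 2 = ‖w‖ ^ 2 := by
        simp only [EuclideanSpace.real_norm_sq_eq, hw]
    _ ≤ (∑ k ∈ s, ‖v k‖) ^ 2 := pow_le_pow_left₀ (norm_nonneg _) htri 2

end EuclideanSpace

theorem reed_chip_diverse_sigma_air_bound_general
    (K d M : ℕ) (hK : 1 ≤ K)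
    (Δ : Fin K → EuclideanSpace ℝ (Fin d))
    (B η σz : ℝ) (hη : 0 < η)
    (c : Fin M → ℝ)
    (CM : ℝ) (hCMpos : 0 < CM)
    (hΔ : ∀ k, ‖Δ k‖ ≤ B)
    (u : Fin K → Fin d → ℝ) (hu : ∀ k j, u k j = Δ k j / K) :
    ∑ j, (((∑ m, (c m) ^ 2) / CM ^ 2)
          * ((∑ k, max (u k j) 0) ^ 2 + (∑ k, max (-(u k j)) 0) ^ 2)
        + (2 * σz ^ 2 / (η * CM)) * ∑ k, |u k j|
        + 2 * M * σz ^ 4 / (η ^ 2 * CM ^ 2))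
      ≤ ((∑ m, (c m) ^ 2) / CM ^ 2) * B ^ 2
        + (2 * σz ^ 2 * Real.sqrt d / (η * CM)) * B
        + 2 * d * M * σz ^ 4 / (η ^ 2 * CM ^ 2) := by
  set U : Fin K → EuclideanSpace ℝ (Fin d) := fun k => WithLp.toLp 2 (u k)
  have hU : ∀ k, U k = (K : ℝ)⁻¹ • Δ k := fun k => by
    ext j; simp [U, hu, div_eq_inv_mul]
  have hK0 : (K : ℝ) ≠ 0 := by positivity
  have hsum : ∑ k, ‖U k‖ ≤ B := calc
    ∑ k, ‖U k‖ ≤ ∑ _k : Fin K, (K : ℝ)⁻¹ * B := sum_le_sum fun k _ => by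
      rw [hU, norm_smul, norm_inv, Real.norm_natCast]; gcongr; exact hΔ k
    _ = B := by simp [hK0]
  have hquad : ∑ j, ((∑ k, max (u k j) 0) ^ 2 + (∑ k, max (-(u k j)) 0) ^ 2) ≤ B ^ 2 := calc
    _ ≤ ∑ j, (∑ k, |U k j|) ^ 2 :=
      sum_le_sum fun j _ => sq_sum_max_zero_add_sq_sum_max_neg_zero_le _ fun k => u k j
    _ ≤ (∑ k, ‖U k‖) ^ 2 := EuclideanSpace.sum_sq_sum_abs_le_sq_sum_norm _ U
    _ ≤ B ^ 2 := pow_le_pow_left₀ (sum_nonneg fun k _ => norm_nonneg _) hsum 2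
  have hlin : ∑ j, ∑ k, |u k j| ≤ √d * B := calc
    _ ≤ √(Fintype.card (Fin d)) * ∑ k, ‖U k‖ :=
      EuclideanSpace.sum_sum_abs_le_sqrt_card_mul_sum_norm _ U
    _ ≤ √d * B := by rw [Fintype.card_fin]; gcongr
  calc _ = ((∑ m, (c m) ^ 2) / CM ^ 2)
          * ∑ j, ((∑ k, max (u k j) 0) ^ 2 + (∑ k, max (-(u k j)) 0) ^ 2)
        + (2 * σz ^ 2 / (η * CM)) * ∑ j, ∑ k, |u k j|
        + d * (2 * M * σz ^ 4 / (η ^ 2 * CM ^ 2)) := by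
        simp only [sum_add_distrib, ← mul_sum, sum_const, card_univ, Fintype.card_fin,
          nsmul_eq_mul]
    _ ≤ ((∑ m, (c m) ^ 2) / CM ^ 2) * B ^ 2 + (2 * σz ^ 2 / (η * CM)) * (√d * B)
        + d * (2 * M * σz ^ 4 / (η ^ 2 * CM ^ 2)) := by gcongr
    _ = _ := by ring

/-- Lemma 1 (chip-diverse second-moment bound, deterministic core): if
`‖Δ_k‖₂ ≤ B` for all `k` and `u_{k,j} = Δ_{k,j}/K`, then the coordinate-wise
sum of the chip-diverse REED variances is bounded by
`((∑ m c_m²)/C_M²)B² + (2σ_z²√d/(η C_M))B + 2dMσ_z⁴/(η² C_M²)`. -/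
theorem reed_chip_diverse_sigma_air_bound
    (K d M : ℕ) (hK : 1 ≤ K) (hM : 1 ≤ M)
    (Δ : Fin K → EuclideanSpace ℝ (Fin d))
    (B η σz : ℝ) (hB : 0 < B) (hη : 0 < η) (hσz : 0 ≤ σz)
    (c : Fin M → ℝ) (hc : ∀ m, 0 ≤ c m)
    (CM : ℝ) (hCM : CM = ∑ m, c m) (hCMpos : 0 < CM)
    (hΔ : ∀ k, ‖Δ k‖ ≤ B)
    (u : Fin K → Fin d → ℝ) (hu : ∀ k j, u k j = Δ k j / K) :
    ∑ j, (((∑ m, (c m) ^ 2) / CM ^ 2)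
          * ((∑ k, max (u k j) 0) ^ 2 + (∑ k, max (-(u k j)) 0) ^ 2)
        + (2 * σz ^ 2 / (η * CM)) * ∑ k, |u k j|
        + 2 * M * σz ^ 4 / (η ^ 2 * CM ^ 2))
      ≤ ((∑ m, (c m) ^ 2) / CM ^ 2) * B ^ 2
        + (2 * σz ^ 2 * Real.sqrt d / (η * CM)) * B
        + 2 * d * M * σz ^ 4 / (η ^ 2 * CM ^ 2) :=
  reed_chip_diverse_sigma_air_bound_general K d M hK Δ B η σz hη c CM hCMpos hΔ u hu
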